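/- arXiv:2305.01919 — 6 statements merged into one kernel-verified Lean document; each statement's English description precedes it below -/
import Mathlib

section
/- The universal q-tree U_{q,n} does not contain a (q+1)-copy of any cycle C_k (k ≥ 3). That is, there is no subset H of U_{q,n} forming a (q+1)-copy of a cycle. -/
open Finset

/-- The support of a vector: indices of nonzero entries. -/
def qsupport {n : ℕ} (x : Fin n → ℕ) : Finset (Fin n) :=
  Finset.univ.filter (fun i => x i ≠ 0)

/-- `Qset q n` : all q-edges, i.e. vectors in `{0,…,q}^n` with exactly two nonzero entries. -/
def Qset (q n : ℕ) : Finset (Fin n → ℕ) :=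
  ((Finset.univ : Finset (Fin n → Fin (q+1))).image (fun f i => (f i : ℕ))).filter
    (fun x => (qsupport x).card = 2)

/-- The q-edge with support `{i,j}`, value `a` at `i` and `b` at `j`. -/
def qedge {n : ℕ} (i j : Fin n) (a b : ℕ) : Fin n → ℕ :=
  fun k => if k = i then a else if k = j then b else 0

/-- `H` is an `s`-copy of the graph `F`. -/
def IsSCopy {α : Type} [Fintype α] (s : ℕ) (F : SimpleGraph α) {n : ℕ}
    (H : Finset (Fin n → ℕ)) : Prop :=
  ∃ ι : α → Fin n, Function.Injective ι ∧
    (∀ u v : α, F.Adj u v ↔ ∃ x ∈ H, qsupport x = {ι u, ι v}) ∧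
    H.card = Nat.card F.edgeSet ∧
    ∀ x ∈ H, ∀ y ∈ H, x ≠ y → ∀ i, x i ≠ 0 → y i ≠ 0 → s ≤ x i + y i

/-- `H` contains an `s`-copy of `F`. -/
def ContainsSCopy {α : Type} [Fintype α] (s : ℕ) (F : SimpleGraph α) {n : ℕ}
    (H : Finset (Fin n → ℕ)) : Prop :=
  ∃ H' ⊆ H, IsSCopy s F H'

/-- The ordinary Turán number `ex(n,F)`. -/
noncomputable def exNum {α : Type} [Fintype α] (n : ℕ) (F : SimpleGraph α) : ℕ :=
  sSup {m | ∃ G : SimpleGraph (Fin n),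
    (¬ ∃ φ : F →g G, Function.Injective φ) ∧ m = Nat.card G.edgeSet}

/-- The Turán number `ex(n,F,q,s)`. -/
noncomputable def exQ {α : Type} [Fintype α] (n : ℕ) (F : SimpleGraph α) (q s : ℕ) : ℕ :=
  sSup {m | ∃ H ⊆ Qset q n, ¬ ContainsSCopy s F H ∧ m = H.card}

/-- The universal q-tree `U_{q,n}`. -/
def Uset (q n : ℕ) : Finset (Fin n → ℕ) :=
  (Qset q n).filter (fun x => (∑ i, x i < q + 1) ∨
    ∃ i j : Fin n, i < j ∧ qsupport x = {i, j} ∧ x i < x j ∧ x i + x j = q + 1)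


lemma mem_qsupport {n : ℕ} {x : Fin n → ℕ} {i : Fin n} : i ∈ qsupport x ↔ x i ≠ 0 := by
  simp [qsupport]

lemma sum_of_qsupport {n : ℕ} {x : Fin n → ℕ} {a b : Fin n} (hab : a ≠ b)
    (h : qsupport x = {a, b}) : ∑ i, x i = x a + x b := by
  rw [← Finset.sum_pair hab, ← h]
  exact (Finset.sum_subset (Finset.subset_univ _) (by
    intro i _ hi
    rw [mem_qsupport, not_not] at hi
    exact hi)).symm

lemma pair_eq_pair {n : ℕ} {a b c d : Fin n} (hab : a < b) (hcd : c < d)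
    (h : ({a, b} : Finset (Fin n)) = {c, d}) : a = c ∧ b = d := by
  have ha : a = c ∨ a = d := by
    have : a ∈ ({c, d} : Finset (Fin n)) := h ▸ Finset.mem_insert_self a {b}
    simpa using this
  have hb : b = c ∨ b = d := by
    have : b ∈ ({c, d} : Finset (Fin n)) := h ▸ Finset.mem_insert_of_mem (Finset.mem_singleton_self b)
    simpa using this
  rcases ha with rfl | rfl <;> rcases hb with rfl | rfl
  · exact absurd hab (lt_irrefl _)
  · exact ⟨rfl, rfl⟩
  · exact absurd (hab.trans hcd) (lt_irrefl _)
  · exact absurd hab (lt_irrefl _)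

/-- The universal q-tree contains no `(q+1)`-copy of any cycle. -/
theorem universal_tree_no_cycle (q n : ℕ) (hq : 1 ≤ q) (hn : 1 ≤ n)
    (k : ℕ) (hk : 3 ≤ k) (H : Finset (Fin n → ℕ)) (hH : H ⊆ Uset q n) :
    ¬ IsSCopy (q + 1) (SimpleGraph.cycleGraph k) H := by
  obtain ⟨m, rfl⟩ : ∃ m, k = m + 3 := ⟨k - 3, by omega⟩
  intro hcopy
  rw [IsSCopy] at hcopy
  obtain ⟨ι, hinj, hadj, hcard, hsum⟩ := hcopy
  -- basic Fin facts
  have hne_succ : ∀ v : Fin (m+3), v ≠ v + 1 := by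
    intro v h
    have h3 := left_eq_add.mp h
    rw [Fin.ext_iff, Fin.val_one, Fin.val_zero] at h3
    exact absurd h3 (by omega)
  have hne_pm : ∀ v : Fin (m+3), v + 1 ≠ v - 1 := by
    intro v h
    have h2 : v + (1 + 1) = v := by rw [← add_assoc, h, sub_add_cancel]
    have h3 := left_eq_add.mp h2.symm
    rw [Fin.ext_iff, Fin.val_add, Fin.val_one, Fin.val_zero,
      Nat.mod_eq_of_lt (by omega)] at h3
    exact absurd h3 (by omega)
  -- choose the q-edges
  have hA : ∀ v : Fin (m+3), ∃ x ∈ H, qsupport x = {ι v, ι (v+1)} := by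
    intro v
    exact (hadj v (v+1)).mp (SimpleGraph.cycleGraph_adj.mpr (Or.inr (add_sub_cancel_left v 1)))
  choose E hEH hEs using hA
  have hEs' : ∀ v : Fin (m+3), qsupport (E (v-1)) = {ι (v-1), ι v} := by
    intro v
    rw [hEs (v-1), sub_add_cancel]
  have hEne : ∀ v : Fin (m+3), E v ≠ E (v-1) := by
    intro v h
    have h1 : ι (v+1) ∈ ({ι (v-1), ι v} : Finset (Fin n)) := by
      rw [← hEs' v, ← h, hEs v]
      exact Finset.mem_insert_of_mem (Finset.mem_singleton_self _)
    simp only [Finset.mem_insert, Finset.mem_singleton] at h1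
    rcases h1 with h1 | h1
    · exact hne_pm v (hinj h1)
    · exact hne_succ v (hinj h1).symm
  have hnz : ∀ v : Fin (m+3), E v (ι v) ≠ 0 := by
    intro v
    rw [← mem_qsupport, hEs v]
    exact Finset.mem_insert_self _ _
  have hnz' : ∀ v : Fin (m+3), E (v-1) (ι v) ≠ 0 := by
    intro v
    rw [← mem_qsupport, hEs' v]
    exact Finset.mem_insert_of_mem (Finset.mem_singleton_self _)
  have hιne : ∀ v : Fin (m+3), ι v ≠ ι (v+1) := fun v h => hne_succ v (hinj h)
  have hEsum : ∀ v : Fin (m+3), ∑ i, E v i = E v (ι v) + E v (ι (v+1)) :=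
    fun v => sum_of_qsupport (hιne v) (hEs v)
  -- upper bound
  have hub : ∀ v : Fin (m+3), ∑ i, E v i ≤ q + 1 := by
    intro v
    have := hH (hEH v)
    rw [Uset, Finset.mem_filter] at this
    rcases this.2 with h | ⟨i, j, hij, hs, hlt, heq⟩
    · omega
    · rw [sum_of_qsupport (ne_of_lt hij) hs, heq]
  -- lower bound per vertex
  have hlow : ∀ v : Fin (m+3), q + 1 ≤ E v (ι v) + E (v-1) (ι v) := by
    intro v
    exact hsum _ (hEH v) _ (hEH (v-1)) (hEne v) (ι v) (hnz v) (hnz' v)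
  -- double counting
  have hT : ∑ v : Fin (m+3), (E v (ι v) + E (v-1) (ι v)) = ∑ v : Fin (m+3), ∑ i, E v i := by
    rw [Finset.sum_add_distrib]
    have hre : ∑ v : Fin (m+3), E (v-1) (ι v) = ∑ v : Fin (m+3), E v (ι (v+1)) := by
      apply Fintype.sum_equiv (Equiv.subRight (1 : Fin (m+3)))
      intro v
      simp only [Equiv.subRight_apply, sub_add_cancel]
    rw [hre, ← Finset.sum_add_distrib]
    exact Finset.sum_congr rfl (fun v _ => (hEsum v).symm)
  -- conclude every edge has sum exactly q+1
  have hall : ∀ v : Fin (m+3), ∑ i, E v i = q + 1 := by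
    by_contra hcon
    push_neg at hcon
    obtain ⟨v0, hv0⟩ := hcon
    have h1 : ∑ v : Fin (m+3), ∑ i, E v i < ∑ _v : Fin (m+3), (q+1) :=
      Finset.sum_lt_sum (fun v _ => hub v)
        ⟨v0, Finset.mem_univ _, lt_of_le_of_ne (hub v0) hv0⟩
    have h2 : ∑ _v : Fin (m+3), (q+1) ≤ ∑ v : Fin (m+3), (E v (ι v) + E (v-1) (ι v)) :=
      Finset.sum_le_sum (fun v _ => hlow v)
    rw [hT] at h2
    omega
  -- every edge is "=" type
  have heqt : ∀ v : Fin (m+3), ∃ i j : Fin n, i < j ∧ qsupport (E v) = {i, j} ∧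
      E v i < E v j ∧ E v i + E v j = q + 1 := by
    intro v
    have := hH (hEH v)
    rw [Uset, Finset.mem_filter] at this
    rcases this.2 with h | h
    · rw [hall v] at h; omega
    · exact h
  -- minimal vertex
  obtain ⟨v, -, hv⟩ := Finset.exists_min_image (Finset.univ : Finset (Fin (m+3)))
    (fun v => ι v) ⟨0, Finset.mem_univ 0⟩
  have hlt1 : ι v < ι (v + 1) :=
    lt_of_le_of_ne (hv _ (Finset.mem_univ _)) (hιne v)
  have hlt2 : ι v < ι (v - 1) := by
    refine lt_of_le_of_ne (hv _ (Finset.mem_univ _)) (fun h => ?_)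
    have hv1 : v = v - 1 := hinj h
    have : v + 1 = v - 1 + 1 := by rw [← hv1]
    rw [sub_add_cancel] at this
    exact hne_succ v this.symm
  -- small at ι v for both edges
  obtain ⟨i, j, hij, hs, hltx, heqx⟩ := heqt v
  obtain ⟨a, b, hab, hs2, hlty, heqy⟩ := heqt (v - 1)
  rw [hEs v] at hs
  rw [hEs' v, Finset.pair_comm] at hs2
  obtain ⟨rfl, rfl⟩ := pair_eq_pair hij hlt1 hs.symm
  obtain ⟨rfl, rfl⟩ := pair_eq_pair hab hlt2 hs2.symm
  have := hlow v
  omega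
end

section
/- If a graph F has a connected component C with |V(C)| < |E(C)|, then any (q+1)-copy of F in a q-graph must contain a q-edge x with x_i ≥ (q+1)/2 for both indices i in the support of x. Consequently, the q-graph consisting of all q-edges that have at least one nonzero entry strictly less than (q+1)/2 contains no (q+1)-copy of F. -/
open Finset

/-- If `F` has a component with more edges than vertices, then every `(q+1)`-copy of `F`
contains a q-edge all of whose nonzero entries are at least `(q+1)/2`; consequently the
q-graph of all q-edges having a nonzero entry below `(q+1)/2` contains no `(q+1)`-copy of `F`. -/
theorem copy_contains_large_edge {α : Type} [Fintype α] (F : SimpleGraph α) (n q : ℕ)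
    (hq : 1 ≤ q) (hn : 1 ≤ n)
    (hcomp : ∃ c : F.ConnectedComponent,
      Nat.card c.supp <
        Nat.card {e : Sym2 α | e ∈ F.edgeSet ∧ ∀ v ∈ e, F.connectedComponentMk v = c}) :
    (∀ H : Finset (Fin n → ℕ), H ⊆ Qset q n → IsSCopy (q + 1) F H →
      ∃ x ∈ H, ∀ i, x i ≠ 0 → q + 1 ≤ 2 * x i) ∧
    ¬ ContainsSCopy (q + 1) F
      ((Qset q n).filter (fun x => ∃ i, x i ≠ 0 ∧ 2 * x i < q + 1)) := by
  have main : ∀ H : Finset (Fin n → ℕ), H ⊆ Qset q n → IsSCopy (q + 1) F H →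
      ∃ x ∈ H, ∀ i, x i ≠ 0 → q + 1 ≤ 2 * x i := by
    intro H hHsub hcopy
    by_contra hcon
    push_neg at hcon
    obtain ⟨c, hc⟩ := hcomp
    obtain ⟨ι, hι, hadj, hcard, hsum⟩ := hcopy
    set S : Set (Sym2 α) :=
      {e : Sym2 α | e ∈ F.edgeSet ∧ ∀ v ∈ e, F.connectedComponentMk v = c} with hS
    have claim : ∀ e ∈ S, ∃ w : α, F.connectedComponentMk w = c ∧
        ∃ x ∈ H, x (ι w) ≠ 0 ∧ 2 * x (ι w) ≤ q ∧
        ∃ u v : α, e = s(u, v) ∧ qsupport x = {ι u, ι v} := by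
      intro e he
      induction e using Sym2.ind with
      | _ u v =>
        obtain ⟨hadj_uv, hcc⟩ := he
        rw [SimpleGraph.mem_edgeSet] at hadj_uv
        obtain ⟨x, hxH, hxsupp⟩ := (hadj u v).1 hadj_uv
        obtain ⟨i, hi0, hiq⟩ := hcon x hxH
        have hi : i ∈ qsupport x := by simp [qsupport, hi0]
        rw [hxsupp] at hi
        simp only [Finset.mem_insert, Finset.mem_singleton] at hi
        rcases hi with hi | hi <;> subst hi
        · exact ⟨u, hcc u (Sym2.mem_mk_left u v), x, hxH, hi0, by omega, u, v, rfl, hxsupp⟩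
        · exact ⟨v, hcc v (Sym2.mem_mk_right u v), x, hxH, hi0, by omega, u, v, rfl, hxsupp⟩
    let f : S → c.supp := fun e =>
      ⟨(claim e.1 e.2).choose, by
        rw [SimpleGraph.ConnectedComponent.mem_supp_iff]
        exact (claim e.1 e.2).choose_spec.1⟩
    have hfinj : Function.Injective f := by
      rintro ⟨e, he⟩ ⟨e', he'⟩ hfe
      simp only [f, Subtype.mk.injEq] at hfe
      obtain ⟨x, hxH, hx0, hxq, u, v, heq, hsupp⟩ := (claim e he).choose_spec.2
      obtain ⟨x', hxH', hx0', hxq', u', v', heq', hsupp'⟩ := (claim e' he').choose_spec.2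
      rw [hfe] at hx0 hxq
      have hxx : x = x' := by
        by_contra hne
        have := hsum x hxH x' hxH' hne _ hx0 hx0'
        omega
      subst hxx
      rw [hsupp] at hsupp'
      have hsupp2 : ({ι u, ι v} : Set (Fin n)) = {ι u', ι v'} := by
        have := congrArg (fun s : Finset (Fin n) => (s : Set (Fin n))) hsupp'
        simpa using this
      rw [Set.pair_eq_pair_iff] at hsupp2
      apply Subtype.ext
      show e = e'
      rw [heq, heq']
      rcases hsupp2 with ⟨h1, h2⟩ | ⟨h1, h2⟩
      · rw [hι h1, hι h2]
      · rw [hι h1, hι h2, Sym2.eq_swap]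
    have hle := Nat.card_le_card_of_injective f hfinj
    omega
  refine ⟨main, ?_⟩
  rintro ⟨H', hH'sub, hcopy⟩
  have hsub2 : H' ⊆ Qset q n := hH'sub.trans (Finset.filter_subset _ _)
  obtain ⟨x, hxH, hlarge⟩ := main H' hsub2 hcopy
  obtain ⟨i, hi0, hilt⟩ := (Finset.mem_filter.1 (hH'sub hxH)).2
  have := hlarge i hi0
  omega
end

section
/- For any graph F, any n ≥ |V(F)|, and any q ≥ 1: if a q-graph H ⊆ Q(n,2) contains no (q+1)-copy of F, then |H| ≤ (q² − (q − ⌈(q+1)/2⌉ + 1)²)·C(n,2) + (q − ⌈(q+1)/2⌉ + 1)²·ex(n,F), where ex(n,F) is the ordinary Turán number of F. -/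
open Finset

lemma mem_Qset_iff {q n : ℕ} {x : Fin n → ℕ} :
    x ∈ Qset q n ↔ (∀ i, x i ≤ q) ∧ (qsupport x).card = 2 := by
  simp only [Qset, mem_filter, mem_image, mem_univ, true_and, and_congr_left_iff]
  refine fun _ => ⟨?_, fun h => ⟨fun i => ⟨x i, Nat.lt_succ_of_le (h i)⟩, rfl⟩⟩
  rintro ⟨f, rfl⟩ i
  exact Nat.lt_succ_iff.mp (f i).isLt

lemma ContainsSCopy.mono {α : Type} [Fintype α] {s : ℕ} {F : SimpleGraph α} {n : ℕ}
    {H H' : Finset (Fin n → ℕ)} (h : ContainsSCopy s F H) (hHH' : H ⊆ H') :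
    ContainsSCopy s F H' :=
  let ⟨K, hK, hcopy⟩ := h
  ⟨K, hK.trans hHH', hcopy⟩

lemma Sym2.toFinset_injective {β : Type*} [DecidableEq β] :
    Function.Injective (Sym2.toFinset : Sym2 β → Finset β) :=
  fun _ _ h => Sym2.ext fun x => by rw [← Sym2.mem_toFinset, h, Sym2.mem_toFinset]

section QEdges

variable {n : ℕ}

lemma eq_of_qsupport_eq_pair {x y : Fin n → ℕ} {i j : Fin n} (hx : qsupport x = {i, j})
    (hy : qsupport y = {i, j}) (hi : x i = y i) (hj : x j = y j) : x = y := by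
  funext k
  by_cases hk : k ∈ ({i, j} : Finset (Fin n))
  · rcases mem_insert.mp hk with rfl | hk
    · exact hi
    · rw [mem_singleton.mp hk]; exact hj
  · have hxk : k ∉ qsupport x := hx ▸ hk
    have hyk : k ∉ qsupport y := hy ▸ hk
    rw [mem_qsupport, not_not] at hxk hyk
    rw [hxk, hyk]

lemma card_le_mul_card_image_qsupport (T : Finset (Fin n → ℕ)) (P : Finset (ℕ × ℕ))
    (hT : ∀ x ∈ T, (qsupport x).card = 2)
    (hP : ∀ x ∈ T, ∀ i j, qsupport x = {i, j} → (x i, x j) ∈ P) :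
    T.card ≤ P.card * (T.image qsupport).card := by
  refine card_le_mul_card_image T P.card fun s hs => ?_
  obtain ⟨x, hx, rfl⟩ := mem_image.mp hs
  obtain ⟨i, j, -, hij⟩ := card_eq_two.mp (hT x hx)
  refine card_le_card_of_injOn (fun y => (y i, y j)) (fun y hy => ?_) fun y hy z hz hyz => ?_
  · obtain ⟨hyT, hys⟩ := mem_filter.mp hy
    exact hP y hyT i j (hys.trans hij)
  · obtain ⟨-, hys⟩ := mem_filter.mp hy
    obtain ⟨-, hzs⟩ := mem_filter.mp hz
    obtain ⟨hi, hj⟩ := Prod.mk.inj hyz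
    exact eq_of_qsupport_eq_pair (hys.trans hij) (hzs.trans hij) hi hj

lemma card_image_qsupport_le_choose (T : Finset (Fin n → ℕ))
    (hT : ∀ x ∈ T, (qsupport x).card = 2) : (T.image qsupport).card ≤ n.choose 2 := by
  have hsub : T.image qsupport ⊆ powersetCard 2 univ := by
    rintro s hs
    obtain ⟨x, hx, rfl⟩ := mem_image.mp hs
    exact mem_powersetCard.mpr ⟨subset_univ _, hT x hx⟩
  simpa using card_le_card hsub

/-- The part `H^L` of `H`, for the threshold `c = ⌈(q+1)/2⌉`. -/
def largePart (c : ℕ) (H : Finset (Fin n → ℕ)) : Finset (Fin n → ℕ) :=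
  H.filter fun x => ∀ i, x i ≠ 0 → c ≤ x i

lemma largePart_subset (c : ℕ) (H : Finset (Fin n → ℕ)) : largePart c H ⊆ H :=
  filter_subset _ _

lemma card_largePart_le {q c : ℕ} {H : Finset (Fin n → ℕ)} (hH : H ⊆ Qset q n) :
    (largePart c H).card ≤ (q + 1 - c) ^ 2 * ((largePart c H).image qsupport).card := by
  have hQ : ∀ x ∈ largePart c H, x ∈ Qset q n := fun x hx => hH (largePart_subset c H hx)
  convert card_le_mul_card_image_qsupport _ (Icc c q ×ˢ Icc c q)
    (fun x hx => (mem_Qset_iff.mp (hQ x hx)).2) fun x hx i j hij => ?_ using 2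
  · rw [card_product, Nat.card_Icc, sq]
  have hxi : x i ≠ 0 := mem_qsupport.mp (by simp [hij])
  have hxj : x j ≠ 0 := mem_qsupport.mp (by simp [hij])
  have hlarge := (mem_filter.mp hx).2
  have hle := (mem_Qset_iff.mp (hQ x hx)).1
  simp only [mem_product, mem_Icc]
  exact ⟨⟨hlarge i hxi, hle i⟩, hlarge j hxj, hle j⟩

lemma card_sdiff_largePart_le {q c : ℕ} (hc : 1 ≤ c) {H : Finset (Fin n → ℕ)}
    (hH : H ⊆ Qset q n) :
    (H \ largePart c H).card ≤ (q ^ 2 - (q + 1 - c) ^ 2) * n.choose 2 := by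
  have hQ : ∀ x ∈ H \ largePart c H, x ∈ Qset q n := fun x hx => hH (sdiff_subset hx)
  have hsupp : ∀ x ∈ H \ largePart c H, (qsupport x).card = 2 :=
    fun x hx => (mem_Qset_iff.mp (hQ x hx)).2
  have hlarge : Icc c q ×ˢ Icc c q ⊆ Icc 1 q ×ˢ Icc 1 q :=
    product_subset_product (Icc_subset_Icc_left hc) (Icc_subset_Icc_left hc)
  have hcard : (Icc 1 q ×ˢ Icc 1 q \ Icc c q ×ˢ Icc c q).card = q ^ 2 - (q + 1 - c) ^ 2 := by
    rw [card_sdiff_of_subset hlarge, card_product, card_product, Nat.card_Icc, Nat.card_Icc,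
      Nat.add_sub_cancel, sq, sq]
  rw [← hcard]
  refine (card_le_mul_card_image_qsupport _ _ hsupp fun x hx i j hij => ?_).trans
    (Nat.mul_le_mul_left _ (card_image_qsupport_le_choose _ hsupp))
  obtain ⟨hxH, hxsmall⟩ := mem_sdiff.mp hx
  have hxi : x i ≠ 0 := mem_qsupport.mp (by simp [hij])
  have hxj : x j ≠ 0 := mem_qsupport.mp (by simp [hij])
  have hle := (mem_Qset_iff.mp (hQ x hx)).1
  simp only [mem_sdiff, mem_product, mem_Icc]
  refine ⟨⟨⟨Nat.one_le_iff_ne_zero.mpr hxi, hle i⟩, Nat.one_le_iff_ne_zero.mpr hxj, hle j⟩,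
    fun ⟨⟨hci, _⟩, hcj, _⟩ => hxsmall (mem_filter.mpr ⟨hxH, fun k hk => ?_⟩)⟩
  have hk' : k ∈ ({i, j} : Finset (Fin n)) := hij ▸ mem_qsupport.mpr hk
  rcases mem_insert.mp hk' with rfl | hk'
  · exact hci
  · rw [mem_singleton.mp hk']; exact hcj

def supportGraph (L : Finset (Fin n → ℕ)) : SimpleGraph (Fin n) :=
  SimpleGraph.fromEdgeSet {e | ∃ x ∈ L, qsupport x = e.toFinset}

lemma card_image_qsupport_le_card_edgeSet (L : Finset (Fin n → ℕ))
    (hL : ∀ x ∈ L, (qsupport x).card = 2) :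
    (L.image qsupport).card ≤ Nat.card (supportGraph L).edgeSet := by
  classical
  rw [Nat.card_eq_fintype_card, ← SimpleGraph.edgeFinset_card]
  refine (card_le_card fun s hs => ?_).trans (card_image_le (f := Sym2.toFinset))
  obtain ⟨x, hx, rfl⟩ := mem_image.mp hs
  obtain ⟨i, j, hne, hij⟩ := card_eq_two.mp (hL x hx)
  refine mem_image.mpr ⟨s(i, j), ?_, by rw [hij, Sym2.toFinset_mk_eq]⟩
  rw [SimpleGraph.mem_edgeFinset, SimpleGraph.mem_edgeSet, supportGraph,
    SimpleGraph.fromEdgeSet_adj]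
  exact ⟨⟨x, hx, by rw [hij, Sym2.toFinset_mk_eq]⟩, hne⟩

lemma containsSCopy_of_injective_hom {α : Type} [Fintype α] {F : SimpleGraph α} {s c : ℕ}
    (hs : s ≤ c + c) {L : Finset (Fin n → ℕ)} (hL : ∀ x ∈ L, ∀ i, x i ≠ 0 → c ≤ x i)
    (φ : F →g supportGraph L) (hφ : Function.Injective φ) : ContainsSCopy s F L := by
  classical
  have hlift : ∀ e : F.edgeSet, ∃ x ∈ L, qsupport x = (e.1.map φ).toFinset := by
    rintro ⟨e, he⟩
    have hφe : e.map φ ∈ (supportGraph L).edgeSet := φ.map_mem_edgeSet he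
    unfold supportGraph at hφe
    rw [SimpleGraph.edgeSet_fromEdgeSet] at hφe
    exact hφe.1
  choose g hgL hg using hlift
  have hg_inj : Function.Injective g := fun e e' h =>
    Subtype.ext (Sym2.map.injective hφ (Sym2.toFinset_injective (by rw [← hg, ← hg, h])))
  have hsub : univ.image g ⊆ L := fun x hx => by
    obtain ⟨e, -, rfl⟩ := mem_image.mp hx
    exact hgL e
  refine ⟨univ.image g, hsub, φ, hφ, fun u v => ⟨fun huv => ?_, ?_⟩, ?_, ?_⟩
  · refine ⟨g ⟨s(u, v), huv⟩, mem_image_of_mem _ (mem_univ _), ?_⟩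
    rw [hg, Sym2.map_mk, Sym2.toFinset_mk_eq]
  · rintro ⟨x, hx, hxuv⟩
    obtain ⟨e, -, rfl⟩ := mem_image.mp hx
    have he : e.1 = s(u, v) := Sym2.map.injective hφ (Sym2.toFinset_injective
      (by rw [← hg, hxuv, Sym2.map_mk, Sym2.toFinset_mk_eq]))
    exact (SimpleGraph.mem_edgeSet F).mp (he ▸ e.2)
  · rw [card_image_of_injective _ hg_inj, card_univ, Nat.card_eq_fintype_card]
  · intro x hx y hy _ i hxi hyi
    exact hs.trans (Nat.add_le_add (hL x (hsub hx) i hxi) (hL y (hsub hy) i hyi))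

end QEdges

lemma card_edgeSet_le_exNum {α : Type} [Fintype α] {F : SimpleGraph α} {n : ℕ}
    (G : SimpleGraph (Fin n)) (hG : ¬ ∃ φ : F →g G, Function.Injective φ) :
    Nat.card G.edgeSet ≤ exNum n F := by
  refine le_csSup ⟨n.choose 2, ?_⟩ ⟨G, hG, rfl⟩
  rintro m ⟨G', -, rfl⟩
  classical
  rw [Nat.card_eq_fintype_card, ← SimpleGraph.edgeFinset_card]
  simpa using G'.card_edgeFinset_le_card_choose_two

theorem upper_bound_via_L_general {α : Type} [Fintype α] (F : SimpleGraph α) (n q : ℕ)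
    (hq : 1 ≤ q)
    (H : Finset (Fin n → ℕ)) (hH : H ⊆ Qset q n)
    (hfree : ¬ ContainsSCopy (q + 1) F H) :
    H.card ≤ (q ^ 2 - (q - (q + 2) / 2 + 1) ^ 2) * n.choose 2
      + (q - (q + 2) / 2 + 1) ^ 2 * exNum n F := by
  set c := (q + 2) / 2
  set L := largePart c H
  rw [show q - c + 1 = q + 1 - c by omega]
  have hLfree : ¬ ∃ φ : F →g supportGraph L, Function.Injective φ := fun ⟨φ, hφ⟩ =>
    hfree ((containsSCopy_of_injective_hom (by omega) (fun x hx => (mem_filter.mp hx).2) φ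
      hφ).mono (largePart_subset c H))
  have hsupp : ∀ x ∈ L, (qsupport x).card = 2 :=
    fun x hx => (mem_Qset_iff.mp (hH (largePart_subset c H hx))).2
  calc H.card = (H \ L).card + L.card := (card_sdiff_add_card_eq_card (largePart_subset c H)).symm
    _ ≤ (q ^ 2 - (q + 1 - c) ^ 2) * n.choose 2 + (q + 1 - c) ^ 2 * exNum n F :=
      Nat.add_le_add (card_sdiff_largePart_le (by omega) hH) <| (card_largePart_le hH).trans <|
        Nat.mul_le_mul_left _ <| (card_image_qsupport_le_card_edgeSet L hsupp).trans <|
          card_edgeSet_le_exNum _ hLfree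

/-- The trivial upper bound: if `H ⊆ Q(n,2)` has no `(q+1)`-copy of `F`, then
`|H| ≤ (q² − (q − ⌈(q+1)/2⌉ + 1)²)·C(n,2) + (q − ⌈(q+1)/2⌉ + 1)²·ex(n,F)`. -/
theorem upper_bound_via_L {α : Type} [Fintype α] (F : SimpleGraph α) (n q : ℕ)
    (hq : 1 ≤ q) (hn : Fintype.card α ≤ n)
    (H : Finset (Fin n → ℕ)) (hH : H ⊆ Qset q n)
    (hfree : ¬ ContainsSCopy (q + 1) F H) :
    H.card ≤ (q ^ 2 - (q - (q + 2) / 2 + 1) ^ 2) * n.choose 2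
      + (q - (q + 2) / 2 + 1) ^ 2 * exNum n F :=
  upper_bound_via_L_general F n q hq H hH hfree
end

section
/- For integers 1 ≤ r ≤ s ≤ t with t ≥ 2, the robust chromatic number χ₁(K_{r,s,t}) equals 2 if r ≤ 2, and equals 3 if r ≥ 3. -/
open Finset

/-- A 1-selection of `F`: each vertex is assigned an edge of `F` containing it. -/
def OneSelection {α : Type} (F : SimpleGraph α) (f : α → Sym2 α) : Prop :=
  ∀ v, f v ∈ F.edgeSet ∧ v ∈ f v

/-- The robust chromatic number `χ₁(F)`: the minimum chromatic number of a 1-removed graph. -/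
noncomputable def robustChrom {α : Type} (F : SimpleGraph α) : ℕ∞ :=
  ⨅ f : {f : α → Sym2 α // OneSelection F f},
    (F.deleteEdges (Set.range f.1)).chromaticNumber

/-- Index of the part of a vertex of the complete tripartite graph. -/
def partIdx {r s t : ℕ} : Fin r ⊕ Fin s ⊕ Fin t → Fin 3
  | Sum.inl _ => 0
  | Sum.inr (Sum.inl _) => 1
  | Sum.inr (Sum.inr _) => 2

/-- The complete tripartite graph `K_{r,s,t}`. -/
def K3part (r s t : ℕ) : SimpleGraph (Fin r ⊕ Fin s ⊕ Fin t) :=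
  SimpleGraph.fromRel (fun u v => partIdx u ≠ partIdx v)

/-! A 1-selection removes at most one edge per vertex, and a removed edge inside a vertex set
`S` was selected by one of its endpoints, which lie in `S`. So an independent set `S` of the
1-removed graph spans at most `|S|` edges of `K_{r,s,t}`: if `S` meets the parts in `x, y, z`
vertices, then `xy + xz + yz ≤ x + y + z`. This fails for the whole vertex set once `t ≥ 2`,
so `χ₁ ≥ 2`. If every part has at least three vertices, one of two colour classes contains at
least two vertices of each of two parts, and the inequality forces that class to have part
counts `(2, 2, 0)` and the other class to fail it; so `χ₁ ≥ 3`, and colouring by parts gives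
`χ₁ ≤ 3`. For `r ≤ 2`, letting the second part remove its edges to one vertex of the first part
and the third part its edges to the other one leaves a bipartite graph. -/

open SimpleGraph

section OneSelection

variable {V : Type} {F : SimpleGraph V}

lemma robustChrom_le_of_deleteEdges_colorable {f : V → Sym2 V} (hf : OneSelection F f) {n : ℕ}
    (hc : (F.deleteEdges (Set.range f)).Colorable n) : robustChrom F ≤ n :=
  iInf_le_of_le ⟨f, hf⟩ hc.chromaticNumber_le

lemma robustChrom_le_of_colorable (hF : ∀ v, ∃ w, F.Adj v w) {n : ℕ} (hc : F.Colorable n) :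
    robustChrom F ≤ n := by
  choose g hg using hF
  exact robustChrom_le_of_deleteEdges_colorable (f := fun v => s(v, g v))
    (fun v => ⟨hg v, Sym2.mem_mk_left _ _⟩) (hc.mono_left (F.deleteEdges_le _))

lemma le_robustChrom_of_forall_not_colorable {n : ℕ}
    (h : ∀ f, OneSelection F f → ¬ (F.deleteEdges (Set.range f)).Colorable n) :
    ((n + 1 : ℕ) : ℕ∞) ≤ robustChrom F :=
  le_iInf fun f => le_chromaticNumber_iff_colorable.2 fun m hm => by
    by_contra hlt
    exact h f.1 f.2 (hm.mono (by exact_mod_cast Order.le_of_lt_add_one (not_le.1 hlt)))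

/-- Each edge of `F` inside `S` was removed, so it was selected by one of its endpoints. -/
lemma card_le_card_of_isIndepSet_deleteEdges [DecidableEq V] {f : V → Sym2 V}
    (hf : ∀ v, v ∈ f v) {S : Finset V}
    (hS : (F.deleteEdges (Set.range f)).IsIndepSet S) {E : Finset (Sym2 V)}
    (hE : ∀ e ∈ E, e ∈ F.edgeSet ∧ ∀ v ∈ e, v ∈ S) : #E ≤ #S := by
  refine (card_le_card (t := S.image f) fun e he => ?_).trans card_image_le
  obtain ⟨heF, heS⟩ := hE e he
  induction e using Sym2.ind with
  | h u v =>
    obtain ⟨w, hw⟩ : s(u, v) ∈ Set.range f := by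
      by_contra hnot
      exact hS (heS u (Sym2.mem_mk_left u v)) (heS v (Sym2.mem_mk_right u v))
        (F.ne_of_adj heF) ((F.deleteEdges_adj).2 ⟨heF, hnot⟩)
    exact mem_image.2 ⟨w, heS w (hw ▸ hf w), hw⟩

end OneSelection

section PartCount

variable {V : Type} (p : V → Fin 3) (S : Finset V)

lemma card_eq_sum_card_filter_fin_three :
    #S = #{v ∈ S | p v = 0} + #{v ∈ S | p v = 1} + #{v ∈ S | p v = 2} := by
  rw [card_eq_sum_card_fiberwise (fun v _ => mem_univ (p v)), Fin.sum_univ_three]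

lemma card_filter_lt_eq :
    #{q ∈ S ×ˢ S | p q.1 < p q.2} = #{v ∈ S | p v = 0} * #{v ∈ S | p v = 1} +
      #{v ∈ S | p v = 0} * #{v ∈ S | p v = 2} + #{v ∈ S | p v = 1} * #{v ∈ S | p v = 2} := by
  have sum_comp (g : Fin 3 → ℕ) :
      ∑ v ∈ S, g (p v) = ∑ i, #{v ∈ S | p v = i} * g i := by
    rw [← sum_fiberwise S p]
    refine sum_congr rfl fun i _ => ?_
    rw [sum_congr rfl fun v hv => by rw [(mem_filter.1 hv).2], sum_const, smul_eq_mul]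
  calc #{q ∈ S ×ˢ S | p q.1 < p q.2}
      = ∑ u ∈ S, ∑ v ∈ S, if p u < p v then 1 else 0 := by
        rw [card_eq_sum_ones, sum_filter, sum_product]
    _ = ∑ u ∈ S, ∑ j, #{v ∈ S | p v = j} * if p u < j then 1 else 0 :=
        sum_congr rfl fun u _ => sum_comp fun j => if p u < j then 1 else 0
    _ = ∑ i, #{v ∈ S | p v = i} * ∑ j, #{v ∈ S | p v = j} * if i < j then 1 else 0 :=
        sum_comp fun i => ∑ j, #{v ∈ S | p v = j} * if i < j then 1 else 0
    _ = _ := by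
        simp only [Fin.sum_univ_three, Fin.reduceLT, lt_self_iff_false, reduceIte]
        ring

lemma mul_add_mul_add_mul_le_of_isIndepSet_deleteEdges [DecidableEq V] {G : SimpleGraph V}
    (hG : ∀ u v, p u ≠ p v → G.Adj u v) {f : V → Sym2 V} (hf : ∀ v, v ∈ f v)
    (hS : (G.deleteEdges (Set.range f)).IsIndepSet S) :
    #{v ∈ S | p v = 0} * #{v ∈ S | p v = 1} + #{v ∈ S | p v = 0} * #{v ∈ S | p v = 2} +
      #{v ∈ S | p v = 1} * #{v ∈ S | p v = 2} ≤
    #{v ∈ S | p v = 0} + #{v ∈ S | p v = 1} + #{v ∈ S | p v = 2} := by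
  rw [← card_filter_lt_eq, ← card_eq_sum_card_filter_fin_three]
  have hinj : Set.InjOn (fun q : V × V => s(q.1, q.2))
      (({q ∈ S ×ˢ S | p q.1 < p q.2} : Finset (V × V)) : Set (V × V)) := by
    rintro q hq q' hq' heq
    simp only [coe_filter] at hq hq'
    rcases Sym2.mk_eq_mk_iff.1 heq with rfl | rfl
    · rfl
    · exact absurd hq.2 (lt_asymm hq'.2)
  rw [← card_image_of_injOn hinj]
  refine card_le_card_of_isIndepSet_deleteEdges hf hS fun e he => ?_
  obtain ⟨⟨u, v⟩, huv, rfl⟩ := mem_image.1 he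
  simp only [mem_filter, mem_product] at huv
  refine ⟨hG u v huv.2.ne, fun w hw => ?_⟩
  rcases Sym2.mem_iff.1 hw with rfl | rfl
  exacts [huv.1.1, huv.1.2]

end PartCount

section Arithmetic

variable {x y z x' y' z' : ℕ}

lemma add_lt_mul_add_mul_add_mul (hx : 1 ≤ x) (hy : 1 ≤ y) (hz : 2 ≤ z) :
    x + y + z < x * y + x * z + y * z := by
  nlinarith

lemma eq_two_two_zero_of_mul_add_mul_add_mul_le (hx : 2 ≤ x) (hy : 2 ≤ y)
    (h : x * y + x * z + y * z ≤ x + y + z) : x = 2 ∧ y = 2 ∧ z = 0 :=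
  ⟨by nlinarith, by nlinarith, by nlinarith⟩

lemma false_of_two_le_of_mul_add_mul_add_mul_le (x y z x' y' z' : ℕ) (hx : 2 ≤ x) (hy : 2 ≤ y)
    (hxx : 3 ≤ x + x') (hyy : 3 ≤ y + y') (hzz : 3 ≤ z + z')
    (h : x * y + x * z + y * z ≤ x + y + z) (h' : x' * y' + x' * z' + y' * z' ≤ x' + y' + z') :
    False := by
  obtain ⟨rfl, rfl, rfl⟩ := eq_two_two_zero_of_mul_add_mul_add_mul_le hx hy h
  exact (add_lt_mul_add_mul_add_mul (by omega) (by omega) (by omega)).not_ge h'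

/-- Each of the three coordinates is at least `2` on one side, so one side has two coordinates
that are at least `2`. -/
lemma false_of_three_le_add_of_mul_add_mul_add_mul_le
    (hxx : 3 ≤ x + x') (hyy : 3 ≤ y + y') (hzz : 3 ≤ z + z')
    (h : x * y + x * z + y * z ≤ x + y + z) (h' : x' * y' + x' * z' + y' * z' ≤ x' + y' + z') :
    False := by
  have two_le (a b : ℕ) (hab : 3 ≤ a + b) : 2 ≤ a ∨ 2 ≤ b := by omega
  rcases two_le x x' hxx with hx | hx <;> rcases two_le y y' hyy with hy | hy <;>
    rcases two_le z z' hzz with hz | hz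
  · exact false_of_two_le_of_mul_add_mul_add_mul_le x y z x' y' z' hx hy hxx hyy hzz h h'
  · exact false_of_two_le_of_mul_add_mul_add_mul_le x y z x' y' z' hx hy hxx hyy hzz h h'
  · exact false_of_two_le_of_mul_add_mul_add_mul_le x z y x' z' y' hx hz hxx hzz hyy
      (by linarith) (by linarith)
  · exact false_of_two_le_of_mul_add_mul_add_mul_le y' z' x' y z x hy hz (by omega) (by omega)
      (by omega) (by linarith) (by linarith)
  · exact false_of_two_le_of_mul_add_mul_add_mul_le y z x y' z' x' hy hz hyy hzz hxx
      (by linarith) (by linarith)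
  · exact false_of_two_le_of_mul_add_mul_add_mul_le x' z' y' x z y hx hz (by omega) (by omega)
      (by omega) (by linarith) (by linarith)
  · exact false_of_two_le_of_mul_add_mul_add_mul_le x' y' z' x y z hx hy (by omega) (by omega)
      (by omega) h' h
  · exact false_of_two_le_of_mul_add_mul_add_mul_le x' y' z' x y z hx hy (by omega) (by omega)
      (by omega) h' h

end Arithmetic

section Tripartite

variable {r s t : ℕ}

lemma K3part_adj {u v : Fin r ⊕ Fin s ⊕ Fin t} :
    (K3part r s t).Adj u v ↔ partIdx u ≠ partIdx v :=
  ⟨fun h => h.2.elim id Ne.symm, fun h => ⟨fun e => h (e ▸ rfl), Or.inl h⟩⟩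

lemma card_filter_partIdx (i : Fin 3) :
    #{v : Fin r ⊕ Fin s ⊕ Fin t | partIdx v = i} = ![r, s, t] i := by
  rw [card_filter, Fintype.sum_sum_type, Fintype.sum_sum_type]
  fin_cases i <;> simp [partIdx]

lemma K3part_exists_adj (hr : 1 ≤ r) (hs : 1 ≤ s) (v : Fin r ⊕ Fin s ⊕ Fin t) :
    ∃ w, (K3part r s t).Adj v w := by
  rcases v with a | b | c
  · exact ⟨.inr (.inl ⟨0, hs⟩), K3part_adj.2 (by simp [partIdx])⟩
  · exact ⟨.inl ⟨0, hr⟩, K3part_adj.2 (by simp [partIdx])⟩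
  · exact ⟨.inl ⟨0, hr⟩, K3part_adj.2 (by simp [partIdx])⟩

lemma K3part_colorable_three : (K3part r s t).Colorable 3 :=
  ⟨Coloring.mk partIdx fun h => K3part_adj.1 h⟩

lemma K3part_deleteEdges_not_colorable_one (hr : 1 ≤ r) (hs : 1 ≤ s) (ht : 2 ≤ t)
    {f : Fin r ⊕ Fin s ⊕ Fin t → Sym2 (Fin r ⊕ Fin s ⊕ Fin t)} (hf : ∀ v, v ∈ f v) :
    ¬ ((K3part r s t).deleteEdges (Set.range f)).Colorable 1 := by
  rintro ⟨c⟩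
  have hindep : ((K3part r s t).deleteEdges (Set.range f)).IsIndepSet
      (univ : Finset (Fin r ⊕ Fin s ⊕ Fin t)) :=
    fun _ _ _ _ _ hadj => c.valid hadj (Subsingleton.elim _ _)
  have hsparse := mul_add_mul_add_mul_le_of_isIndepSet_deleteEdges partIdx univ
    (fun _ _ => K3part_adj.2) hf hindep
  rw [card_filter_partIdx, card_filter_partIdx, card_filter_partIdx] at hsparse
  exact (add_lt_mul_add_mul_add_mul hr hs ht).not_ge hsparse

lemma K3part_deleteEdges_not_colorable_two (hr : 3 ≤ r) (hs : 3 ≤ s) (ht : 3 ≤ t)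
    {f : Fin r ⊕ Fin s ⊕ Fin t → Sym2 (Fin r ⊕ Fin s ⊕ Fin t)} (hf : ∀ v, v ∈ f v) :
    ¬ ((K3part r s t).deleteEdges (Set.range f)).Colorable 2 := by
  rintro ⟨c⟩
  have hindep (k : Fin 2) :
      ((K3part r s t).deleteEdges (Set.range f)).IsIndepSet ({v | c v = k} : Finset _) := by
    intro u hu v hv _ hadj
    simp only [coe_filter, mem_univ, true_and, Set.mem_ofPred_eq] at hu hv
    exact c.valid hadj (hu.trans hv.symm)
  have hsparse (k : Fin 2) := mul_add_mul_add_mul_le_of_isIndepSet_deleteEdges partIdx _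
    (fun _ _ => K3part_adj.2) hf (hindep k)
  have hsplit (i : Fin 3) :
      #{v ∈ {v | c v = 0} | partIdx v = i} + #{v ∈ {v | c v = 1} | partIdx v = i} =
        ![r, s, t] i := by
    rw [← card_filter_partIdx i, card_eq_sum_card_fiberwise (s := {v | partIdx v = i})
      fun v _ => mem_univ (c v), Fin.sum_univ_two]
    congr 1 <;> rw [filter_comm]
  exact false_of_three_le_add_of_mul_add_mul_add_mul_le ((hsplit 0).symm ▸ hr)
    ((hsplit 1).symm ▸ hs) ((hsplit 2).symm ▸ ht) (hsparse 0) (hsparse 1)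

lemma K3part_deleteEdges_colorable_of_partIdx_lt {n : ℕ} (c : Fin r ⊕ Fin s ⊕ Fin t → Fin n)
    {f : Fin r ⊕ Fin s ⊕ Fin t → Sym2 (Fin r ⊕ Fin s ⊕ Fin t)}
    (h : ∀ u v, partIdx u < partIdx v → c u = c v → s(u, v) ∈ Set.range f) :
    ((K3part r s t).deleteEdges (Set.range f)).Colorable n :=
  ⟨Coloring.mk c fun {u v} hadj hc => by
    obtain ⟨hK, hnot⟩ := deleteEdges_adj.1 hadj
    rcases lt_or_gt_of_ne (K3part_adj.1 hK) with hlt | hlt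
    · exact hnot (h u v hlt hc)
    · exact hnot (Sym2.eq_swap ▸ h v u hlt hc.symm)⟩

/-- The colour classes are `{a₀}` with the second part, and the rest of the first part (at most
`a₁`, as `r ≤ 2`) with the third part. -/
lemma robustChrom_K3part_le_two (hr : 1 ≤ r) (hr2 : r ≤ 2) (ht : 1 ≤ t) :
    robustChrom (K3part r s t) ≤ 2 := by
  let a₀ : Fin r := ⟨0, hr⟩
  let a₁ : Fin r := ⟨r - 1, by omega⟩
  let f : Fin r ⊕ Fin s ⊕ Fin t → Sym2 (Fin r ⊕ Fin s ⊕ Fin t)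
    | .inl a => s(.inl a, .inr (.inr ⟨0, ht⟩))
    | .inr (.inl b) => s(.inl a₀, .inr (.inl b))
    | .inr (.inr c) => s(.inl a₁, .inr (.inr c))
  let col : Fin r ⊕ Fin s ⊕ Fin t → Fin 2
    | .inl a => if a = a₀ then 0 else 1
    | .inr (.inl _) => 0
    | .inr (.inr _) => 1
  have hf : OneSelection (K3part r s t) f := by
    rintro (a | b | c) <;> simp [f, K3part_adj, partIdx]
  refine robustChrom_le_of_deleteEdges_colorable hf
    (K3part_deleteEdges_colorable_of_partIdx_lt col ?_)
  rintro (a | b | c) (a' | b' | c') hlt hcol <;>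
    simp only [partIdx, Fin.reduceLT, lt_self_iff_false] at hlt
  · have ha : a = a₀ := by
      by_contra h
      simp [col, h] at hcol
    exact ⟨.inr (.inl b'), by simp [f, ha]⟩
  · have ha : a = a₁ := by
      have h0 : (a : ℕ) ≠ 0 := fun h => by simp [col, a₀, Fin.ext_iff, h] at hcol
      exact Fin.ext (by simp only [a₁]; omega)
    exact ⟨.inr (.inr c'), by simp [f, ha]⟩
  · simp [col] at hcol

end Tripartite

/-- For `1 ≤ r ≤ s ≤ t` with `t ≥ 2`: `χ₁(K_{r,s,t}) = 2` if `r ≤ 2`, and `= 3` if `r ≥ 3`. -/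
theorem robustChrom_tripartite (r s t : ℕ) (hr : 1 ≤ r) (hrs : r ≤ s) (hst : s ≤ t)
    (ht : 2 ≤ t) :
    (r ≤ 2 → robustChrom (K3part r s t) = 2) ∧
    (3 ≤ r → robustChrom (K3part r s t) = 3) := by
  have two_le : (2 : ℕ∞) ≤ robustChrom (K3part r s t) :=
    le_robustChrom_of_forall_not_colorable (n := 1) fun _ hf =>
      K3part_deleteEdges_not_colorable_one hr (hr.trans hrs) ht fun v => (hf v).2
  refine ⟨fun hr2 => (robustChrom_K3part_le_two hr hr2 (by omega)).antisymm two_le,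
    fun hr3 => le_antisymm ?_ ?_⟩
  · exact robustChrom_le_of_colorable (K3part_exists_adj hr (hr.trans hrs))
      K3part_colorable_three
  · exact le_robustChrom_of_forall_not_colorable (n := 2) fun _ hf =>
      K3part_deleteEdges_not_colorable_two hr3 (hr3.trans hrs) (hr3.trans (hrs.trans hst))
        fun v => (hf v).2
end

section
/- For the graph G = K_{3,3,3} and any 1-selection f of G, the 1-removed graph G_f has chromatic number at least 3. In particular, χ₁(K_{3,3,3}) = 3. -/
open Finset

instance : DecidableRel (K3part 3 3 3).Adj := fun u v =>
  decidable_of_iff (u ≠ v ∧ (partIdx u ≠ partIdx v ∨ partIdx v ≠ partIdx u))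
    (by rw [K3part, SimpleGraph.fromRel_adj])

set_option maxRecDepth 10000 in
lemma edges_in_five (S : Finset (Fin 3 ⊕ Fin 3 ⊕ Fin 3)) (h : S.card = 5) :
    6 ≤ ((K3part 3 3 3).edgeFinset.filter (fun e => ∀ v ∈ e, v ∈ S)).card := by
  revert h; revert S; decide

lemma not_colorable_two (f : (Fin 3 ⊕ Fin 3 ⊕ Fin 3) → Sym2 (Fin 3 ⊕ Fin 3 ⊕ Fin 3))
    (hf : OneSelection (K3part 3 3 3) f) :
    ¬ ((K3part 3 3 3).deleteEdges (Set.range f)).Colorable 2 := by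
  rintro ⟨C⟩
  -- pigeonhole: some color class has ≥ 5 vertices
  obtain ⟨c, hc⟩ : ∃ c : Fin 2, 5 ≤ (Finset.univ.filter (fun v => C v = c)).card := by
    by_contra h
    push_neg at h
    have h0 := h 0
    have h1 := h 1
    have := Finset.card_filter_add_card_filter_not
      (s := (Finset.univ : Finset (Fin 3 ⊕ Fin 3 ⊕ Fin 3))) (p := fun v => C v = 0)
    have hcard : (Finset.univ : Finset (Fin 3 ⊕ Fin 3 ⊕ Fin 3)).card = 9 := by decide
    have hsub : (Finset.univ.filter (fun v => ¬ C v = 0)) ⊆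
        (Finset.univ.filter (fun v => C v = 1)) := by
      intro v hv
      simp only [Finset.mem_filter, Finset.mem_univ, true_and] at hv ⊢
      omega
    have := Finset.card_le_card hsub
    omega
  obtain ⟨S, hS5, hSsub⟩ : ∃ S : Finset (Fin 3 ⊕ Fin 3 ⊕ Fin 3), S.card = 5 ∧
      S ⊆ Finset.univ.filter (fun v => C v = c) :=
    ⟨_, Finset.exists_subset_card_eq hc |>.choose_spec.2, (Finset.exists_subset_card_eq hc).choose_spec.1⟩
  -- S is independent in the deleted graph, so every K333-edge inside S is removed by f
  have hedge : ∀ e ∈ (K3part 3 3 3).edgeFinset.filter (fun e => ∀ v ∈ e, v ∈ S),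
      e ∈ S.image f := by
    intro e he
    rw [Finset.mem_filter, SimpleGraph.mem_edgeFinset] at he
    obtain ⟨he1, he2⟩ := he
    induction e with
    | h u v =>
      rw [SimpleGraph.mem_edgeSet] at he1
      have hu : u ∈ S := he2 u (Sym2.mem_mk_left u v)
      have hv : v ∈ S := he2 v (Sym2.mem_mk_right u v)
      have hcu := (hSsub hu); have hcv := (hSsub hv)
      simp only [Finset.mem_filter] at hcu hcv
      have hne : ¬ ((K3part 3 3 3).deleteEdges (Set.range f)).Adj u v := by
        intro hadj
        exact (C.valid hadj) (hcu.2.trans hcv.2.symm)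
      rw [SimpleGraph.deleteEdges_adj] at hne
      push_neg at hne
      have hmem : s(u, v) ∈ Set.range f := hne he1
      obtain ⟨w, hw⟩ := hmem
      have hwmem : w ∈ s(u, v) := hw ▸ (hf w).2
      have hwS : w ∈ S := he2 w hwmem
      exact Finset.mem_image.mpr ⟨w, hwS, hw⟩
  have h6 := edges_in_five S hS5
  have hle : ((K3part 3 3 3).edgeFinset.filter (fun e => ∀ v ∈ e, v ∈ S)).card
      ≤ (S.image f).card := Finset.card_le_card hedge
  have : (S.image f).card ≤ 5 := hS5 ▸ Finset.card_image_le
  omega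

def selK333 : (Fin 3 ⊕ Fin 3 ⊕ Fin 3) → Sym2 (Fin 3 ⊕ Fin 3 ⊕ Fin 3)
  | Sum.inl i => s(Sum.inl i, Sum.inr (Sum.inl 0))
  | Sum.inr x => s(Sum.inr x, Sum.inl 0)

lemma selK333_oneSelection : OneSelection (K3part 3 3 3) selK333 := by
  intro v
  constructor
  · rcases v with i | x | x <;>
    · simp only [selK333, SimpleGraph.mem_edgeSet, K3part, SimpleGraph.fromRel_adj]
      exact ⟨by simp, Or.inl (by simp [partIdx])⟩
  · rcases v with i | x | x <;> simp [selK333]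

lemma deleted_colorable_three (s : Set (Sym2 (Fin 3 ⊕ Fin 3 ⊕ Fin 3))) :
    ((K3part 3 3 3).deleteEdges s).Colorable 3 := by
  refine ⟨SimpleGraph.Coloring.mk partIdx ?_⟩
  intro u v hadj
  have h := (SimpleGraph.deleteEdges_adj.mp hadj).1
  rw [K3part, SimpleGraph.fromRel_adj] at h
  rcases h.2 with h2 | h2
  · exact h2
  · exact h2.symm

lemma three_le_chrom (f : (Fin 3 ⊕ Fin 3 ⊕ Fin 3) → Sym2 (Fin 3 ⊕ Fin 3 ⊕ Fin 3))
    (hf : OneSelection (K3part 3 3 3) f) :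
    3 ≤ ((K3part 3 3 3).deleteEdges (Set.range f)).chromaticNumber := by
  have h2 : ¬ ((K3part 3 3 3).deleteEdges (Set.range f)).chromaticNumber ≤ (2 : ℕ) := by
    rw [SimpleGraph.chromaticNumber_le_iff_colorable]
    exact not_colorable_two f hf
  have := not_le.mp h2
  calc (3 : ℕ∞) = (2 : ℕ) + 1 := by norm_num
    _ ≤ _ := Order.add_one_le_of_lt this

/-- For every 1-selection `f` of `K_{3,3,3}`, the 1-removed graph has chromatic number at
least 3; in particular `χ₁(K_{3,3,3}) = 3`. -/
theorem robustChrom_K333 :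
    (∀ f : (Fin 3 ⊕ Fin 3 ⊕ Fin 3) → Sym2 (Fin 3 ⊕ Fin 3 ⊕ Fin 3),
      OneSelection (K3part 3 3 3) f →
        3 ≤ ((K3part 3 3 3).deleteEdges (Set.range f)).chromaticNumber) ∧
    robustChrom (K3part 3 3 3) = 3 := by
  constructor
  · exact three_le_chrom
  · rw [robustChrom]
    apply le_antisymm
    · refine le_trans (iInf_le _ ⟨selK333, selK333_oneSelection⟩) ?_
      have := (deleted_colorable_three (Set.range selK333)).chromaticNumber_le
      simpa using this
    · exact le_iInf fun g => three_le_chrom g.1 g.2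
end

section
/- Let q ≥ 1, let 1 ≤ a < b ≤ q with a + b = q + 1, and let H ⊆ Q(n,2) be a q-graph containing no (q+1)-copy of the triangle C₃. Then the directed graph H⃗_{a,b} (with arc (i,j) whenever the q-edge with support {i,j}, value a at i and b at j, lies in H) has at most 2·⌊n²/4⌋ arcs. -/
/-! Write `i → j` when the q-edge with value `a` at `i` and `b` at `j` lies in `H`. As
`a + b = q + 1`, a directed triangle `i → j → k → i` is a `(q+1)`-copy of `C₃`, so this digraph
has no directed triangle. A digraph on `m` vertices without directed triangles has at most
`2⌊m²/4⌋` arcs. If it has no 2-cycle, it has at most `m(m-1)/2` arcs. Otherwise take a 2-cycle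
`i ⇄ j`: every other vertex `u` spans at most two arcs with `{i, j}`, since `j → u → i` and
`i → u → j` would each close a triangle, and induction on the remaining `m - 2` vertices
concludes because `⌊(m+2)²/4⌋ = ⌊m²/4⌋ + m + 1`. -/

open Finset

theorem sq_add_two_div_four (m : ℕ) : (m + 2) ^ 2 / 4 = m ^ 2 / 4 + m + 1 := by
  rw [show (m + 2) ^ 2 = m ^ 2 + (m + 1) * 4 by ring, Nat.add_mul_div_right _ _ four_pos, add_assoc]

theorem mul_self_sub_le_four_mul_sq_div_four (m : ℕ) : m * m - m ≤ 4 * (m ^ 2 / 4) := by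
  obtain ⟨k, rfl | rfl⟩ := Nat.even_or_odd' m
  · rw [show (2 * k) ^ 2 = 4 * (k * k) by ring, Nat.mul_div_cancel_left _ four_pos]
    have : 2 * k * (2 * k) = 4 * (k * k) := by ring
    omega
  · rw [show (2 * k + 1) ^ 2 = 1 + (k * k + k) * 4 by ring, Nat.add_mul_div_right _ _ four_pos]
    have : (2 * k + 1) * (2 * k + 1) = 4 * (k * k + k) + 1 := by ring
    omega

theorem card_filter_add_card_filter_le {α : Type*} {p q : α → Prop} [DecidablePred p] [DecidablePred q]
    {s : Finset α} (h : ∀ x ∈ s, p x → ¬ q x) : #{x ∈ s | p x} + #{x ∈ s | q x} ≤ #s := by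
  classical
  rw [← card_union_of_disjoint (disjoint_filter.2 h), ← filter_or]
  exact card_filter_le _ _

section ArcsOn

variable {α : Type*} [DecidableEq α]

def arcsOn (R : α → α → Prop) [DecidableRel R] (s : Finset α) : Finset (α × α) :=
  s.offDiag.filter fun p => R p.1 p.2

variable (R : α → α → Prop) [DecidableRel R]

theorem card_arcsOn_insert {v : α} {t : Finset α} (hv : v ∉ t) :
    #(arcsOn R (insert v t)) = #(arcsOn R t) + #{u ∈ t | R v u} + #{u ∈ t | R u v} := by
  have hout : #(({v} ×ˢ t).filter fun p => R p.1 p.2) = #{u ∈ t | R v u} := by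
    rw [singleton_product, filter_map, card_map]; rfl
  have hin : #((t ×ˢ {v}).filter fun p => R p.1 p.2) = #{u ∈ t | R u v} := by
    rw [product_singleton, filter_map, card_map]; rfl
  rw [arcsOn, arcsOn, offDiag_insert hv, filter_union, filter_union, card_union_of_disjoint,
    card_union_of_disjoint, hout, hin]
  all_goals
    rw [disjoint_left]
    simp only [mem_union, mem_filter, mem_offDiag, mem_product, mem_singleton]
    grind

theorem two_mul_card_arcsOn_le (s : Finset α)
    (hasymm : ∀ x ∈ s, ∀ y ∈ s, x ≠ y → R x y → ¬ R y x) :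
    2 * #(arcsOn R s) ≤ #s.offDiag := by
  have hdisj : Disjoint (arcsOn R s) ((arcsOn R s).image Prod.swap) := by
    rw [disjoint_left]
    simp only [arcsOn, mem_image, mem_filter, mem_offDiag]
    rintro ⟨x, y⟩ ⟨⟨hx, hy, hxy⟩, hR⟩ ⟨⟨y', x'⟩, ⟨-, hR'⟩, h⟩
    simp only [Prod.swap_prod_mk, Prod.mk.injEq] at h
    obtain ⟨rfl, rfl⟩ := h
    exact hasymm _ hx _ hy hxy hR hR'
  have hsub : arcsOn R s ∪ (arcsOn R s).image Prod.swap ⊆ s.offDiag := by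
    simp only [arcsOn, union_subset_iff, filter_subset, image_subset_iff, mem_filter, mem_offDiag,
      Prod.fst_swap, Prod.snd_swap, true_and]
    exact fun p hp => ⟨hp.1.2.1, hp.1.1, hp.1.2.2.symm⟩
  calc 2 * #(arcsOn R s) = #(arcsOn R s ∪ (arcsOn R s).image Prod.swap) := by
        rw [card_union_of_disjoint hdisj, card_image_of_injective _ Prod.swap_injective, two_mul]
    _ ≤ #s.offDiag := card_le_card hsub

variable {R}

theorem card_arcsOn_insert_insert_le
    (htri : ∀ i j k, i ≠ j → j ≠ k → k ≠ i → R i j → R j k → R k i → False)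
    {i j : α} {t : Finset α} (hi : i ∉ insert j t) (hj : j ∉ t) (hij : R i j) (hji : R j i) :
    #(arcsOn R (insert i (insert j t))) ≤ #(arcsOn R t) + 2 * #t + 2 := by
  obtain ⟨hne, hit⟩ : i ≠ j ∧ i ∉ t := by simpa using hi
  have hout : #{u ∈ insert j t | R i u} ≤ #{u ∈ t | R i u} + 1 := by
    rw [filter_insert, if_pos hij]; exact card_insert_le _ _
  have hin : #{u ∈ insert j t | R u i} ≤ #{u ∈ t | R u i} + 1 := by
    rw [filter_insert, if_pos hji]; exact card_insert_le _ _
  have h₁ : #{u ∈ t | R j u} + #{u ∈ t | R u i} ≤ #t :=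
    card_filter_add_card_filter_le fun u hu hju hui =>
      htri u i j (ne_of_mem_of_not_mem hu hit) hne (ne_of_mem_of_not_mem hu hj).symm hui hij hju
  have h₂ : #{u ∈ t | R i u} + #{u ∈ t | R u j} ≤ #t :=
    card_filter_add_card_filter_le fun u hu hiu huj =>
      htri u j i (ne_of_mem_of_not_mem hu hj) hne.symm (ne_of_mem_of_not_mem hu hit).symm huj hji hiu
  rw [card_arcsOn_insert R hi, card_arcsOn_insert R hj]
  omega

theorem card_arcsOn_le
    (htri : ∀ i j k, i ≠ j → j ≠ k → k ≠ i → R i j → R j k → R k i → False) (s : Finset α) :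
    #(arcsOn R s) ≤ 2 * (#s ^ 2 / 4) := by
  induction s using Finset.strongInduction with
  | _ s ih =>
  by_cases hcyc : ∃ i ∈ s, ∃ j ∈ s, i ≠ j ∧ R i j ∧ R j i
  · obtain ⟨i, hi, j, hj, hne, hij, hji⟩ := hcyc
    set t := (s.erase i).erase j
    have hjt : j ∉ t := notMem_erase j _
    have hit : i ∉ insert j t := by simp [t, hne]
    have hs : s = insert i (insert j t) := by
      rw [insert_erase (mem_erase.2 ⟨hne.symm, hj⟩), insert_erase hi]
    have ht : t ⊂ s := (erase_ssubset (mem_erase.2 ⟨hne.symm, hj⟩)).trans (erase_ssubset hi)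
    calc #(arcsOn R s) ≤ #(arcsOn R t) + 2 * #t + 2 := by
          rw [hs]; exact card_arcsOn_insert_insert_le htri hit hjt hij hji
      _ ≤ 2 * (#t ^ 2 / 4) + 2 * #t + 2 := by gcongr; exact ih t ht
      _ = 2 * (#s ^ 2 / 4) := by
          rw [hs, card_insert_of_notMem hit, card_insert_of_notMem hjt, sq_add_two_div_four]
          ring
  · have h := two_mul_card_arcsOn_le R s fun x hx y hy hxy hxy' hyx =>
      hcyc ⟨x, hx, y, hy, hxy, hxy', hyx⟩
    rw [offDiag_card] at h
    have := mul_self_sub_le_four_mul_sq_div_four #s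
    omega

end ArcsOn

section QEdge

variable {n a b : ℕ} {i j k t : Fin n}

theorem qedge_apply_left : qedge i j a b i = a := if_pos rfl

theorem qedge_apply_right (hij : i ≠ j) : qedge i j a b j = b := by
  simp [qedge, hij.symm]

theorem qedge_apply_of_ne (hti : t ≠ i) (htj : t ≠ j) : qedge i j a b t = 0 := by
  simp [qedge, hti, htj]

theorem eq_or_eq_of_qedge_apply_ne_zero (h : qedge i j a b t ≠ 0) : t = i ∨ t = j := by
  by_contra! hc
  exact h (qedge_apply_of_ne hc.1 hc.2)

theorem qsupport_qedge (hij : i ≠ j) (ha : a ≠ 0) (hb : b ≠ 0) :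
    qsupport (qedge i j a b) = {i, j} := by
  ext t
  by_cases hti : t = i
  · subst hti; simp [qsupport, qedge_apply_left, ha]
  by_cases htj : t = j
  · subst htj; simp [qsupport, qedge_apply_right hij, hb]
  · simp [qsupport, qedge_apply_of_ne hti htj, hti, htj]

theorem qedge_ne_qedge {l : Fin n} (ha : a ≠ 0) (hik : i ≠ k) (hil : i ≠ l) :
    qedge i j a b ≠ qedge k l a b := fun h => by
  simpa [qedge_apply_left, qedge_apply_of_ne hik hil, ha] using congrFun h i

theorem qedge_apply_add_qedge_apply (hij : i ≠ j) (hki : k ≠ i)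
    (hx : qedge i j a b t ≠ 0) (hy : qedge j k a b t ≠ 0) :
    qedge i j a b t + qedge j k a b t = a + b := by
  rcases eq_or_eq_of_qedge_apply_ne_zero hx with rfl | rfl
  · rcases eq_or_eq_of_qedge_apply_ne_zero hy with h | h
    exacts [absurd h hij, absurd h hki.symm]
  · rw [qedge_apply_right hij, qedge_apply_left, add_comm]

theorem isSCopy_triangle (ha : a ≠ 0) (hb : b ≠ 0) (hij : i ≠ j) (hjk : j ≠ k) (hki : k ≠ i) :
    IsSCopy (a + b) (⊤ : SimpleGraph (Fin 3))
      ({qedge i j a b, qedge j k a b, qedge k i a b} : Finset (Fin n → ℕ)) := by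
  have hs₁ := qsupport_qedge hij ha hb
  have hs₂ := qsupport_qedge hjk ha hb
  have hs₃ := qsupport_qedge hki ha hb
  refine ⟨![i, j, k], ?_, ?_, ?_, ?_⟩
  · intro u v huv
    fin_cases u <;> fin_cases v <;> simp_all [eq_comm]
  · intro u v
    rw [SimpleGraph.top_adj]
    constructor
    · intro huv
      fin_cases u <;> fin_cases v <;> simp_all [pair_comm]
    · rintro ⟨x, hx, hs⟩ rfl
      have hcard : #(qsupport x) = 1 := by rw [hs, pair_eq_singleton, card_singleton]
      simp only [mem_insert, mem_singleton] at hx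
      rcases hx with rfl | rfl | rfl <;> simp [hs₁, hs₂, hs₃, hij, hjk, hki] at hcard
  · rw [Nat.card_eq_fintype_card, card_insert_of_notMem, card_insert_of_notMem, card_singleton]
    · decide
    · simpa using qedge_ne_qedge ha hjk hij.symm
    · simpa [not_or] using ⟨qedge_ne_qedge ha hij hki.symm, (qedge_ne_qedge ha hki hjk.symm).symm⟩
  · intro x hx y hy hxy t hxt hyt
    simp only [mem_insert, mem_singleton] at hx hy
    rcases hx with rfl | rfl | rfl <;> rcases hy with rfl | rfl | rfl
    all_goals first
      | exact absurd rfl hxy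
      | exact (qedge_apply_add_qedge_apply hij hki hxt hyt).ge
      | exact (qedge_apply_add_qedge_apply hjk hij hxt hyt).ge
      | exact (qedge_apply_add_qedge_apply hki hjk hxt hyt).ge
      | exact ((add_comm _ _).trans (qedge_apply_add_qedge_apply hij hki hyt hxt)).ge
      | exact ((add_comm _ _).trans (qedge_apply_add_qedge_apply hjk hij hyt hxt)).ge
      | exact ((add_comm _ _).trans (qedge_apply_add_qedge_apply hki hjk hyt hxt)).ge

theorem containsSCopy_triangle {H : Finset (Fin n → ℕ)}
    (ha : a ≠ 0) (hb : b ≠ 0) (hij : i ≠ j) (hjk : j ≠ k) (hki : k ≠ i)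
    (h₁ : qedge i j a b ∈ H) (h₂ : qedge j k a b ∈ H) (h₃ : qedge k i a b ∈ H) :
    ContainsSCopy (a + b) (⊤ : SimpleGraph (Fin 3)) H :=
  ⟨_, by simp [insert_subset_iff, h₁, h₂, h₃], isSCopy_triangle ha hb hij hjk hki⟩

end QEdge

theorem arcs_bound_general (n q a b : ℕ) (ha : 1 ≤ a) (hab : a < b)
    (hsum : a + b = q + 1)
    (H : Finset (Fin n → ℕ))
    (hfree : ¬ ContainsSCopy (q + 1) (⊤ : SimpleGraph (Fin 3)) H) :
    ((Finset.univ : Finset (Fin n × Fin n)).filter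
      (fun p => p.1 ≠ p.2 ∧ qedge p.1 p.2 a b ∈ H)).card ≤ 2 * (n ^ 2 / 4) := by
  have htri : ∀ i j k : Fin n, i ≠ j → j ≠ k → k ≠ i →
      qedge i j a b ∈ H → qedge j k a b ∈ H → qedge k i a b ∈ H → False :=
    fun i j k hij hjk hki h₁ h₂ h₃ =>
      hfree (hsum ▸ containsSCopy_triangle (by omega) (by omega) hij hjk hki h₁ h₂ h₃)
  convert card_arcsOn_le htri univ using 2
  · ext p
    simp [arcsOn]
  · simp

/-- If `a < b`, `a + b = q + 1` and `H` has no `(q+1)`-copy of the triangle, then the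
directed graph `H⃗_{a,b}` has at most `2·⌊n²/4⌋` arcs. -/
theorem arcs_bound (n q a b : ℕ) (ha : 1 ≤ a) (hab : a < b) (hb : b ≤ q)
    (hsum : a + b = q + 1)
    (H : Finset (Fin n → ℕ)) (hH : H ⊆ Qset q n)
    (hfree : ¬ ContainsSCopy (q + 1) (⊤ : SimpleGraph (Fin 3)) H) :
    ((Finset.univ : Finset (Fin n × Fin n)).filter
      (fun p => p.1 ≠ p.2 ∧ qedge p.1 p.2 a b ∈ H)).card ≤ 2 * (n ^ 2 / 4) :=
  arcs_bound_general n q a b ha hab hsum H hfree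
end
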